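/- Let u : [0,T] → H be twice continuously differentiable into a real Hilbert space H, b a symmetric nonnegative continuous bilinear form on a dense subspace, and suppose ⟨u''(t), v⟩ + b(u(t), v) = 0 for all v in the subspace and all t, with u'(0) = 0. Then ‖u(t)‖ ≤ ‖u(0)‖ for all t ∈ [0,T]. (Energy estimate for the homogeneous wave equation with zero initial velocity.) -/

import Mathlib

/-!
Write `w r = ∫₀ʳ u`. The pairs `(u t, u'' t)` lie in the weak graph `G` of `-A`, where `A` is the
operator of `b` on `V`; for `(x, z), (y, z') ∈ G` one has `⟪z, x⟫ = -b x x ≤ 0` and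
`⟪z, y⟫ = ⟪z', x⟫`. The symmetry makes `⟪u' t, w t⟫ - ‖u t‖²` constant, so
`‖u r‖² = ‖u 0‖² + ⟪u' r, w r⟫`. Integrating the curve `(u, u'')` over `[0, r]` gives `(w r, u' r)`,
a point of the closure of `G`, where `⟪z, x⟫ ≤ 0` persists by continuity. This replaces the formal
identity `⟪u' r, w r⟫ = -b (w r) (w r)`, meaningless since `w r` need not lie in `V`.
-/

open Set intervalIntegral
open scoped RealInnerProductSpace

section
variable {F : Type*} [NormedAddCommGroup F] [NormedSpace ℝ F] [CompleteSpace F]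

theorem Submodule.intervalIntegral_mem_of_isClosed (K : Submodule ℝ F) (hK : IsClosed (K : Set F))
    {f : ℝ → F} {a b : ℝ} (hf : IntervalIntegrable f MeasureTheory.volume a b)
    (hfK : ∀ x ∈ uIoc a b, f x ∈ K) : ∫ x in a..b, f x ∈ K := by
  have : IsClosed (K : Set F) := hK -- the instance making `F ⧸ K` a normed space
  have h := K.mkQL.intervalIntegral_comp_comm hf
  rw [integral_congr_ae (MeasureTheory.ae_of_all _ fun x hx => (K.mkQL_apply (f x)).trans
    ((Submodule.Quotient.mk_eq_zero K).2 (hfK x hx))), integral_zero] at h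
  exact (Submodule.Quotient.mk_eq_zero K).1 h.symm

end

section
variable {H : Type*} [NormedAddCommGroup H] [InnerProductSpace ℝ H]

def weakGraph (V : Submodule ℝ H) (b : H →ₗ[ℝ] H →ₗ[ℝ] ℝ) : Submodule ℝ (H × H) where
  carrier := {p | p.1 ∈ V ∧ ∀ v ∈ V, ⟪p.2, v⟫ + b p.1 v = 0}
  add_mem' := by
    rintro p q ⟨hp, hpv⟩ ⟨hq, hqv⟩
    refine ⟨V.add_mem hp hq, fun v hv => ?_⟩
    simp only [Prod.fst_add, Prod.snd_add, inner_add_left, map_add, LinearMap.add_apply]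
    linarith [hpv v hv, hqv v hv]
  zero_mem' := ⟨V.zero_mem, fun v _ => by simp⟩
  smul_mem' := by
    rintro c p ⟨hp, hpv⟩
    refine ⟨V.smul_mem c hp, fun v hv => ?_⟩
    simp only [Prod.smul_fst, Prod.smul_snd, real_inner_smul_left, map_smul, LinearMap.smul_apply,
      smul_eq_mul]
    rw [← mul_add, hpv v hv, mul_zero]

variable {V : Submodule ℝ H} {b : H →ₗ[ℝ] H →ₗ[ℝ] ℝ}

theorem weakGraph.inner_comm (hsymm : ∀ v ∈ V, ∀ w ∈ V, b v w = b w v) {p q : H × H}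
    (hp : p ∈ weakGraph V b) (hq : q ∈ weakGraph V b) :
    ⟪p.2, q.1⟫ = ⟪q.2, p.1⟫ := by
  linarith [hp.2 q.1 hq.1, hq.2 p.1 hp.1, hsymm p.1 hp.1 q.1 hq.1]

theorem weakGraph.inner_nonpos (hpos : ∀ v ∈ V, 0 ≤ b v v) {p : H × H}
    (hp : p ∈ weakGraph V b) : ⟪p.2, p.1⟫ ≤ 0 := by
  linarith [hp.2 p.1 hp.1, hpos p.1 hp.1]

theorem weakGraph.inner_nonpos_of_mem_topologicalClosure (hpos : ∀ v ∈ V, 0 ≤ b v v)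
    {p : H × H} (hp : p ∈ (weakGraph V b).topologicalClosure) : ⟪p.2, p.1⟫ ≤ 0 := by
  have hclosed : IsClosed {p : H × H | ⟪p.2, p.1⟫ ≤ (0 : ℝ)} :=
    isClosed_le (continuous_snd.inner continuous_fst) continuous_const
  exact closure_minimal (fun q hq => weakGraph.inner_nonpos hpos hq) hclosed hp

theorem weakGraph.inner_intervalIntegral_nonpos [CompleteSpace H] (hpos : ∀ v ∈ V, 0 ≤ b v v)
    {x z : ℝ → H} (hx : Continuous x) (hz : Continuous z) {a c : ℝ}
    (hmem : ∀ s ∈ uIoc a c, (x s, z s) ∈ weakGraph V b) :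
    ⟪∫ s in a..c, z s, ∫ s in a..c, x s⟫ ≤ 0 := by
  have hint : IntervalIntegrable (fun s => (x s, z s)) MeasureTheory.volume a c :=
    (hx.prodMk hz).intervalIntegrable a c
  have hP := Submodule.intervalIntegral_mem_of_isClosed _
    (weakGraph V b).isClosed_topologicalClosure hint
    fun s hs => (weakGraph V b).le_topologicalClosure (hmem s hs)
  have h1 := (ContinuousLinearMap.fst ℝ H H).intervalIntegral_comp_comm hint
  have h2 := (ContinuousLinearMap.snd ℝ H H).intervalIntegral_comp_comm hint
  simp only [ContinuousLinearMap.coe_fst', ContinuousLinearMap.coe_snd'] at h1 h2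
  rw [h1, h2]
  exact weakGraph.inner_nonpos_of_mem_topologicalClosure hpos hP

end

section
variable {E : Type*} [NormedAddCommGroup E] [InnerProductSpace ℝ E] [CompleteSpace E]
  {u : ℝ → E} {T : ℝ}

theorem inner_deriv_deriv_intervalIntegral_eq (hu : Continuous u)
    (hu' : Differentiable ℝ (deriv u)) (hu'' : Continuous (deriv (deriv u)))
    (h0 : deriv u 0 = 0)
    (hsymm : ∀ s ∈ Icc 0 T, ∀ t ∈ Icc 0 T,
      ⟪deriv (deriv u) t, u s⟫ = ⟪deriv (deriv u) s, u t⟫)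
    {t : ℝ} (ht : t ∈ Icc 0 T) :
    ⟪deriv (deriv u) t, ∫ s in 0..t, u s⟫ = ⟪deriv u t, u t⟫ := by
  calc ⟪deriv (deriv u) t, ∫ s in 0..t, u s⟫
      = ∫ s in 0..t, ⟪deriv (deriv u) t, u s⟫ :=
        ((innerSL ℝ (deriv (deriv u) t)).intervalIntegral_comp_comm
          (hu.intervalIntegrable 0 t)).symm
    _ = ∫ s in 0..t, ⟪u t, deriv (deriv u) s⟫ := by
        refine integral_congr fun s hs => ?_
        rw [uIcc_of_le ht.1] at hs
        rw [hsymm s ⟨hs.1, hs.2.trans ht.2⟩ t ht, real_inner_comm]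
    _ = ⟪u t, ∫ s in 0..t, deriv (deriv u) s⟫ :=
        (innerSL ℝ (u t)).intervalIntegral_comp_comm (hu''.intervalIntegrable 0 t)
    _ = ⟪deriv u t, u t⟫ := by
        rw [integral_deriv_eq_sub (fun s _ => hu' s) (hu''.intervalIntegrable 0 t), h0, sub_zero,
          real_inner_comm]

theorem norm_sq_eq_add_inner_deriv_intervalIntegral (hu : Differentiable ℝ u)
    (hu' : Differentiable ℝ (deriv u)) (hu'' : Continuous (deriv (deriv u)))
    (h0 : deriv u 0 = 0)
    (hsymm : ∀ s ∈ Icc 0 T, ∀ t ∈ Icc 0 T,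
      ⟪deriv (deriv u) t, u s⟫ = ⟪deriv (deriv u) s, u t⟫)
    {r : ℝ} (hr : r ∈ Icc 0 T) :
    ‖u r‖ ^ 2 = ‖u 0‖ ^ 2 + ⟪deriv u r, ∫ s in 0..r, u s⟫ := by
  set φ : ℝ → ℝ := fun t => ⟪deriv u t, ∫ s in 0..t, u s⟫ - ‖u t‖ ^ 2
  have hw : ∀ t, HasDerivAt (fun t => ∫ s in 0..t, u s) (u t) t := fun t =>
    hu.continuous.integral_hasStrictDerivAt 0 t |>.hasDerivAt
  have hφ : ∀ t, HasDerivAt φ (⟪deriv u t, u t⟫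
      + ⟪deriv (deriv u) t, ∫ s in 0..t, u s⟫ - 2 * ⟪u t, deriv u t⟫) t := fun t =>
    ((hu' t).hasDerivAt.inner ℝ (hw t)).sub (hu t).hasDerivAt.norm_sq
  have hconst := constant_of_has_deriv_right_zero (a := 0) (b := T) (f := φ)
    (HasDerivAt.continuousOn fun t _ => hφ t) fun t ht => by
      have := hφ t
      rw [inner_deriv_deriv_intervalIntegral_eq hu.continuous hu' hu'' h0 hsymm
        (Ico_subset_Icc_self ht), real_inner_comm (u t)] at this
      convert this.hasDerivWithinAt using 1
      ring
  have := hconst r hr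
  simp only [φ, integral_same, inner_zero_right, h0] at this
  linarith

end

theorem stmt11_general {H : Type*} [NormedAddCommGroup H] [InnerProductSpace ℝ H] [CompleteSpace H]
    (Vsub : Submodule ℝ H)
    (b : H →ₗ[ℝ] H →ₗ[ℝ] ℝ)
    (hsymm : ∀ v ∈ Vsub, ∀ w ∈ Vsub, b v w = b w v)
    (hpos : ∀ v ∈ Vsub, 0 ≤ b v v)
    (T : ℝ)
    (u : ℝ → H) (hu : ContDiff ℝ 2 u) (huV : ∀ t, u t ∈ Vsub)
    (heq : ∀ t ∈ Set.Icc 0 T, ∀ v ∈ Vsub,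
      (inner ℝ (deriv (deriv u) t) v : ℝ) + b (u t) v = 0)
    (hinit : deriv u 0 = 0) :
    ∀ t ∈ Set.Icc 0 T, ‖u t‖ ≤ ‖u 0‖ := by
  intro r hr
  have hu' : ContDiff ℝ 1 (deriv u) := hu.deriv'
  have hmem : ∀ t ∈ Icc 0 T, (u t, deriv (deriv u) t) ∈ weakGraph Vsub b :=
    fun t ht => ⟨huV t, heq t ht⟩
  have henergy := norm_sq_eq_add_inner_deriv_intervalIntegral (hu.differentiable two_ne_zero)
    (hu'.differentiable one_ne_zero) (hu'.continuous_deriv le_rfl) hinit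
    (fun s hs t ht => weakGraph.inner_comm hsymm (hmem t ht) (hmem s hs)) hr
  have hnonpos : ⟪deriv u r, ∫ s in 0..r, u s⟫ ≤ 0 := by
    have := weakGraph.inner_intervalIntegral_nonpos hpos hu.continuous
      (hu'.continuous_deriv le_rfl) fun s hs => by
        rw [uIoc_of_le hr.1] at hs
        exact hmem s ⟨hs.1.le, hs.2.trans hr.2⟩
    rwa [integral_deriv_eq_sub (fun s _ => hu'.differentiable one_ne_zero s)
      ((hu'.continuous_deriv le_rfl).intervalIntegrable 0 r), hinit, sub_zero] at this
  exact (pow_le_pow_iff_left₀ (norm_nonneg _) (norm_nonneg _) two_ne_zero).mp (by linarith)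

/-- Energy estimate for the homogeneous wave equation with zero initial velocity:
if `⟨u''(t), v⟩ + b(u(t), v) = 0` for all `v` in a dense subspace `V`, with `b`
symmetric nonnegative and `u'(0) = 0`, then `‖u(t)‖ ≤ ‖u(0)‖` on `[0, T]`. -/
theorem stmt11 {H : Type*} [NormedAddCommGroup H] [InnerProductSpace ℝ H] [CompleteSpace H]
    (Vsub : Submodule ℝ H) (hdense : Dense (Vsub : Set H))
    (b : H →ₗ[ℝ] H →ₗ[ℝ] ℝ)
    (hsymm : ∀ v ∈ Vsub, ∀ w ∈ Vsub, b v w = b w v)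
    (hpos : ∀ v ∈ Vsub, 0 ≤ b v v)
    (T : ℝ) (hT : 0 ≤ T)
    (u : ℝ → H) (hu : ContDiff ℝ 2 u) (huV : ∀ t, u t ∈ Vsub)
    (heq : ∀ t ∈ Set.Icc 0 T, ∀ v ∈ Vsub,
      (inner ℝ (deriv (deriv u) t) v : ℝ) + b (u t) v = 0)
    (hinit : deriv u 0 = 0) :
    ∀ t ∈ Set.Icc 0 T, ‖u t‖ ≤ ‖u 0‖ :=
  stmt11_general Vsub b hsymm hpos T u hu huV heq hinit
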